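/- Let K be a commutative Q-algebra, z = (z_1,...,z_n) commuting variables, and H(z) ∈ K[[z]]^n of order ≥ 2. With F_t(z) = z − tH(z) and G_t(z) = F_t^{-1}(z) = z + ∑_{m≥1} t^m N_[m](z), the inversion formula N_[m](z) = ∑_{I ∈ C_m} (1/π_u(I)) ψ^I z holds for every m ≥ 1, where ψ_k = [((JH)^{k-1}H) ∂/∂z] and ψ^I denotes the composition ψ_{i_1} ∘ ··· ∘ ψ_{i_k} of these derivations applied to the vector z componentwise. -/

import Mathlib

/-!
Write `t` for the variable of `K⟦t⟧` and `G = G_t`. Substituting `G` into `F_t` gives the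
fixed-point equation `G = z + t H(G)`. Differentiating in `t` with the chain rule gives
`∂_t G = H(G) + t (JH)(G) ∂_t G`, a linear system whose unique solution is
`∂_t G = ∑_q t^q ((JH)^q H)(G)`. Hence `∂_t f(G) = ∑_q t^q (ψ_{q+1} f)(G)` for every `f`, that is,
`(m + 1) [t^{m+1}] f(G) = ∑_{q + r = m} [t^r] (ψ_{q+1} f)(G)`. Splitting off the last block of a
composition shows that `T_m f = ∑_{I ∈ C_m} π_u(I)⁻¹ ψ^I f` satisfies the same recursion, and
`[t^0] f(G) = f = T_0 f`; so `[t^m] f(G) = T_m f`, and `f = z_i` gives `N_[m] = T_m z`.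
-/

noncomputable section

variable {K : Type*} [CommRing K] [Algebra ℚ K] {n : ℕ}

/-- The formal partial derivative `∂/∂z_j` on `K[[z_1,...,z_n]]`. -/
def pd (j : Fin n) (f : MvPowerSeries (Fin n) K) : MvPowerSeries (Fin n) K :=
  fun e => (e j + 1) • MvPowerSeries.coeff (R := K) (e + Finsupp.single j 1) f

/-- `π_u(I) = ∏_{j=1}^{k} (i_1 + ... + i_j)` for a composition given as a list. -/
def piu (l : List ℕ) : ℕ :=
  ((List.range l.length).map fun j => (l.take (j + 1)).sum).prod

/-- The coefficient of `z^e` in the substitution `f(g_1,...,g_n)` of power series with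
coefficients in `R = K[[t]]`. -/
def substCoeff (f : MvPowerSeries (Fin n) (PowerSeries K))
    (g : Fin n → MvPowerSeries (Fin n) (PowerSeries K)) (e : Fin n →₀ ℕ) :
    PowerSeries K :=
  ∑ d ∈ Finset.Iic (Finsupp.equivFunOnFinite.symm
      fun _ : Fin n => (e.sum fun _ k => k)),
    MvPowerSeries.coeff (R := PowerSeries K) d f *
      MvPowerSeries.coeff (R := PowerSeries K) e (∏ i, g i ^ d i)

/-- The components of `F_t(z) = z - tH(z)`, as elements of `K[[t]][[z]]`. -/
def Fcomp (H : Fin n → MvPowerSeries (Fin n) K) (i : Fin n) :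
    MvPowerSeries (Fin n) (PowerSeries K) :=
  MvPowerSeries.X i -
    MvPowerSeries.C (σ := Fin n) (R := PowerSeries K) PowerSeries.X *
      MvPowerSeries.map (σ := Fin n) (PowerSeries.C (R := K)) (H i)

/-- The power series `N_t(z)_i = ∑_{m≥1} t^{m-1} N_[m](z)_i`. -/
def Ntser (N : ℕ → Fin n → MvPowerSeries (Fin n) K) (i : Fin n) :
    MvPowerSeries (Fin n) (PowerSeries K) :=
  fun e => PowerSeries.mk fun k => MvPowerSeries.coeff (R := K) e (N (k + 1) i)

/-- The components of `G_t(z) = z + tN_t(z)`. -/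
def Gcomp (N : ℕ → Fin n → MvPowerSeries (Fin n) K) (i : Fin n) :
    MvPowerSeries (Fin n) (PowerSeries K) :=
  MvPowerSeries.X i +
    MvPowerSeries.C (σ := Fin n) (R := PowerSeries K) PowerSeries.X * Ntser N i

/-- The derivation `ψ_k = [((JH)^{k-1}H) ∂/∂z]` on `K[[z]]`. -/
def psiOp (H : Fin n → MvPowerSeries (Fin n) K) (k : ℕ) :
    MvPowerSeries (Fin n) K → MvPowerSeries (Fin n) K :=
  fun f => ∑ j,
    ((Matrix.of fun a b => pd b (H a)) ^ (k - 1)).mulVec H j * pd j f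

theorem Finset.Nat.sum_antidiagonal_antidiagonal_assoc {M : Type*} [AddCommMonoid M]
    (f : ℕ → ℕ → ℕ → M) (a : ℕ) :
    ∑ p ∈ antidiagonal a, ∑ q ∈ antidiagonal p.1, f q.1 q.2 p.2 =
      ∑ p ∈ antidiagonal a, ∑ q ∈ antidiagonal p.2, f p.1 q.1 q.2 := by
  rw [sum_sigma', sum_sigma']
  refine sum_nbij' (fun x => ⟨(x.2.1, x.2.2 + x.1.2), (x.2.2, x.1.2)⟩)
    (fun x => ⟨(x.1.1 + x.2.1, x.2.2), (x.1.1, x.2.1)⟩) ?_ ?_ ?_ ?_ fun _ _ => rfl <;>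
  · rintro ⟨⟨b, c⟩, ⟨d, e⟩⟩ h
    simp only [mem_sigma, HasAntidiagonal.mem_antidiagonal, Sigma.mk.injEq, Prod.mk.injEq,
      heq_eq_eq, and_true, true_and] at h ⊢
    omega

open Finset

namespace MvPowerSeries

section MapDerivation

variable {σ τ R S : Type*} [CommRing R] [CommRing S] [Algebra R S]

def mapDerivationFun (D : Derivation R S S) (x : MvPowerSeries τ S) : MvPowerSeries τ S :=
  fun e => D (coeff e x)

theorem mapDerivationFun_mul (D : Derivation R S S) (x y : MvPowerSeries τ S) :
    mapDerivationFun D (x * y) = x * mapDerivationFun D y + y * mapDerivationFun D x := by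
  classical
  rw [mul_comm y]
  ext1 e
  change D (coeff e (x * y)) = _
  simp only [coeff_mul, map_add, map_sum, Derivation.leibniz, smul_eq_mul, ← sum_add_distrib]
  exact sum_congr rfl fun p _ => by
    change _ = coeff p.1 x * D (coeff p.2 y) + D (coeff p.1 x) * coeff p.2 y
    ring

def mapDerivation (D : Derivation R S S) :
    Derivation R (MvPowerSeries τ S) (MvPowerSeries τ S) :=
  Derivation.mk'
    { toFun := mapDerivationFun D
      map_add' := fun x y => MvPowerSeries.ext fun e => map_add D (coeff e x) (coeff e y)
      map_smul' := fun r x => MvPowerSeries.ext fun e => D.map_smul r (coeff e x) }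
    (mapDerivationFun_mul D)

theorem coeff_mapDerivation (D : Derivation R S S) (x : MvPowerSeries τ S) (e : τ →₀ ℕ) :
    coeff e (mapDerivation D x) = D (coeff e x) := rfl

theorem mapDerivation_C (D : Derivation R S S) (s : S) :
    mapDerivation D (C s : MvPowerSeries τ S) = C (D s) := by
  classical
  ext1 e
  rw [coeff_mapDerivation, coeff_C, coeff_C]
  split_ifs <;> simp

theorem mapDerivation_map_algebraMap (D : Derivation R S S) (f : MvPowerSeries τ R) :
    mapDerivation D (map (algebraMap R S) f) = 0 := by
  ext1 e
  rw [coeff_mapDerivation, coeff_map, Derivation.map_algebraMap, map_zero]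

theorem mapDerivation_X (D : Derivation R S S) (i : τ) :
    mapDerivation D (X i : MvPowerSeries τ S) = 0 := by
  rw [← map_X (algebraMap R S) i, mapDerivation_map_algebraMap]

theorem subst_map_algebraMap {g : σ → MvPowerSeries τ S} (hg : HasSubst g)
    (f : MvPowerSeries σ R) : subst g (map (algebraMap R S) f) = subst g f := by
  rw [map_algebraMap_eq_subst_X, subst_comp_subst_apply HasSubst.X hg]
  simp only [subst_X hg]

variable [Fintype σ] {g : σ → MvPowerSeries τ S}

theorem mapDerivation_subst_coe (D : Derivation R S S) (hg : HasSubst g)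
    (p : MvPolynomial σ R) :
    mapDerivation D (subst g (p : MvPowerSeries σ R)) =
      ∑ j, mapDerivation D (g j) * subst g (pderiv R j (p : MvPowerSeries σ R)) := by
  classical
  induction p using MvPolynomial.induction_on with
  | C a =>
    have h0 : subst g (0 : MvPowerSeries σ R) = 0 := by rw [← substAlgHom_apply hg, map_zero]
    rw [MvPolynomial.coe_C]
    simp only [pderiv_C, h0, mul_zero, sum_const_zero]
    rw [c_eq_algebraMap, ← substAlgHom_apply hg, AlgHom.commutes, Derivation.map_algebraMap]
  | add p q hp hq =>
    simp only [MvPolynomial.coe_add, subst_add hg, map_add, hp, hq, ← sum_add_distrib, mul_add]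
  | mul_X p i hp =>
    have hδ : ∀ j, subst g (Pi.single (M := fun _ : σ => MvPowerSeries σ R) j 1 i) =
        if i = j then 1 else 0 := by
      intro j
      rw [Pi.single_apply, ← substAlgHom_apply hg]
      split_ifs
      exacts [map_one _, map_zero _]
    simp only [MvPolynomial.coe_mul, MvPolynomial.coe_X, subst_mul hg, subst_X hg,
      Derivation.leibniz, hp, smul_eq_mul, subst_add hg, pderiv_X, hδ, mul_add, sum_add_distrib,
      mul_sum, mul_ite, mul_one, mul_zero, sum_ite_eq, mem_univ, if_true]
    congr 1
    · exact mul_comm _ _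
    · exact sum_congr rfl fun j _ => by ring

open WithPiTopology in
/-- Both sides are continuous in `f` for the product topology with discrete coefficients, so the
chain rule extends from polynomials, where it follows from the Leibniz rule. -/
theorem mapDerivation_subst (D : Derivation R S S) (hg : HasSubst g) (f : MvPowerSeries σ R) :
    mapDerivation D (subst g f) = ∑ j, mapDerivation D (g j) * subst g (pderiv R j f) := by
  let : UniformSpace R := ⊥
  let : UniformSpace S := ⊥
  have hD : Continuous (mapDerivation D : MvPowerSeries τ S → _) :=
    continuous_pi fun e => continuous_of_discreteTopology.comp (continuous_coeff S e)
  have hP : ∀ j, Continuous (pderiv R j : MvPowerSeries σ R → _) := fun j =>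
    continuous_pi fun e => (continuous_of_discreteTopology (f := fun r : R => r * (e j + 1))).comp
      (continuous_coeff R (e + Finsupp.single j 1))
  exact congr_fun (denseRange_toMvPowerSeries.equalizer (hD.comp (continuous_subst hg))
    (continuous_finsetSum _ fun j _ => continuous_const.mul ((continuous_subst hg).comp (hP j)))
    (funext fun p => mapDerivation_subst_coe D hg p)) f

end MapDerivation

theorem coeff_prod_pow_eq_zero_of_degree_lt {σ τ R : Type*} [CommRing R] [Fintype σ]
    {g : σ → MvPowerSeries τ R} (hg : ∀ j, constantCoeff (g j) = 0) {d : σ →₀ ℕ}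
    {e : τ →₀ ℕ} (h : e.degree < d.degree) : coeff e (∏ j, g j ^ d j) = 0 := by
  refine coeff_of_lt_order (lt_of_lt_of_le ?_ (le_order_prod _ _))
  calc (e.degree : ℕ∞) < d.degree := by exact_mod_cast h
    _ = ∑ j, (d j : ℕ∞) := by rw [Finsupp.degree_eq_sum]; push_cast; rfl
    _ ≤ ∑ j, (g j ^ d j).order :=
      sum_le_sum fun j _ => le_order_pow_of_constantCoeff_eq_zero _ (hg j)

section TCoeff

variable {σ τ R : Type*} [CommRing R]

/-- The coefficient of `t^m`, where `t` is the variable of the coefficient ring `R⟦t⟧`. -/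
def tCoeff (m : ℕ) : MvPowerSeries σ (PowerSeries R) →+ MvPowerSeries σ R where
  toFun x e := PowerSeries.coeff m (coeff e x)
  map_zero' := by ext1 e; exact map_zero _
  map_add' x y := by ext1 e; exact map_add (PowerSeries.coeff m) (coeff e x) (coeff e y)

theorem coeff_tCoeff (m : ℕ) (x : MvPowerSeries σ (PowerSeries R)) (e : σ →₀ ℕ) :
    coeff e (tCoeff m x) = PowerSeries.coeff m (coeff e x) := rfl

theorem ext_tCoeff {x y : MvPowerSeries σ (PowerSeries R)}
    (h : ∀ m, tCoeff m x = tCoeff m y) : x = y :=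
  MvPowerSeries.ext fun e => PowerSeries.ext fun m => by
    rw [← coeff_tCoeff, ← coeff_tCoeff, h]

theorem tCoeff_mul (m : ℕ) (x y : MvPowerSeries σ (PowerSeries R)) :
    tCoeff m (x * y) = ∑ p ∈ antidiagonal m, tCoeff p.1 x * tCoeff p.2 y := by
  classical
  ext1 e
  simp only [coeff_tCoeff, coeff_mul, map_sum, PowerSeries.coeff_mul]
  exact sum_comm

theorem tCoeff_succ_C_X_mul (m : ℕ) (x : MvPowerSeries σ (PowerSeries R)) :
    tCoeff (m + 1) (C PowerSeries.X * x) = tCoeff m x := by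
  ext1 e
  rw [coeff_tCoeff, coeff_C_mul, PowerSeries.coeff_succ_X_mul, coeff_tCoeff]

theorem tCoeff_zero_C_X_mul (x : MvPowerSeries σ (PowerSeries R)) :
    tCoeff 0 (C PowerSeries.X * x) = 0 := by
  ext1 e
  rw [coeff_tCoeff, coeff_C_mul, PowerSeries.coeff_zero_X_mul, map_zero]

theorem tCoeff_map_C (m : ℕ) (f : MvPowerSeries σ R) :
    tCoeff m (map PowerSeries.C f) = if m = 0 then f else 0 := by
  ext1 e
  rw [coeff_tCoeff, coeff_map, PowerSeries.coeff_C]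
  split_ifs <;> simp

theorem tCoeff_mapDerivation_derivative (m : ℕ) (x : MvPowerSeries σ (PowerSeries R)) :
    tCoeff m (mapDerivation (PowerSeries.derivative R) x) = (m + 1) • tCoeff (m + 1) x := by
  ext1 e
  rw [coeff_tCoeff, coeff_mapDerivation, PowerSeries.coeff_derivative, map_nsmul, coeff_tCoeff,
    nsmul_eq_mul, mul_comm]
  push_cast
  rfl

theorem tCoeff_zero_subst {g : σ → MvPowerSeries τ (PowerSeries R)} (hg : HasSubst g)
    (f : MvPowerSeries σ R) : tCoeff 0 (subst g f) = subst (fun j => tCoeff 0 (g j)) f := by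
  have h (x : MvPowerSeries τ (PowerSeries R)) : tCoeff 0 x = map PowerSeries.constantCoeff x :=
    MvPowerSeries.ext fun e => by
      rw [coeff_tCoeff, coeff_map, PowerSeries.coeff_zero_eq_constantCoeff_apply]
  have hid : PowerSeries.constantCoeff.comp (algebraMap R (PowerSeries R)) = RingHom.id R :=
    RingHom.ext fun r => by simp
  rw [h, ← subst_map_algebraMap hg, map_subst hg, map_map, hid, map_id]
  simp only [h, RingHom.id_apply]

/-- The series `∑_q t^q y_q`, defined by its `t`-coefficients. -/
def tSeries (y : ℕ → MvPowerSeries σ (PowerSeries R)) : MvPowerSeries σ (PowerSeries R) :=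
  fun e => PowerSeries.mk fun a => ∑ p ∈ antidiagonal a, PowerSeries.coeff p.2 (coeff e (y p.1))

theorem tCoeff_tSeries (a : ℕ) (y : ℕ → MvPowerSeries σ (PowerSeries R)) :
    tCoeff a (tSeries y) = ∑ p ∈ antidiagonal a, tCoeff p.2 (y p.1) := by
  ext1 e
  rw [coeff_tCoeff, map_sum]
  exact PowerSeries.coeff_mk a fun a =>
    ∑ p ∈ antidiagonal a, PowerSeries.coeff p.2 (coeff e (y p.1))

theorem tSeries_eq_add_C_X_mul (y : ℕ → MvPowerSeries σ (PowerSeries R)) :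
    tSeries y = y 0 + C PowerSeries.X * tSeries fun q => y (q + 1) := by
  refine ext_tCoeff fun a => ?_
  cases a with
  | zero =>
    rw [map_add, tCoeff_zero_C_X_mul, add_zero, tCoeff_tSeries, Nat.antidiagonal_zero,
      sum_singleton]
  | succ a =>
    rw [map_add, tCoeff_succ_C_X_mul, tCoeff_tSeries, tCoeff_tSeries, Nat.sum_antidiagonal_succ]

theorem tSeries_mul (y : ℕ → MvPowerSeries σ (PowerSeries R))
    (z : MvPowerSeries σ (PowerSeries R)) : tSeries y * z = tSeries fun q => y q * z := by
  refine ext_tCoeff fun a => ?_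
  simp only [tCoeff_mul, tCoeff_tSeries, sum_mul]
  exact Nat.sum_antidiagonal_antidiagonal_assoc (fun q r c => tCoeff r (y q) * tCoeff c z) a

theorem sum_tSeries {ι : Type*} (s : Finset ι) (y : ι → ℕ → MvPowerSeries σ (PowerSeries R)) :
    ∑ i ∈ s, tSeries (y i) = tSeries fun q => ∑ i ∈ s, y i q := by
  refine ext_tCoeff fun a => ?_
  simp only [map_sum, tCoeff_tSeries]
  exact sum_comm

theorem eq_of_eq_add_C_X_mul_sum {ι : Type*} [Fintype ι]
    {Y Y' B : ι → MvPowerSeries σ (PowerSeries R)} {M : ι → ι → MvPowerSeries σ (PowerSeries R)}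
    (hY : ∀ j, Y j = B j + C PowerSeries.X * ∑ l, Y l * M l j)
    (hY' : ∀ j, Y' j = B j + C PowerSeries.X * ∑ l, Y' l * M l j) : Y = Y' := by
  suffices h : ∀ a j, tCoeff a (Y j) = tCoeff a (Y' j) from
    funext fun j => ext_tCoeff fun a => h a j
  intro a
  induction a using Nat.strong_induction_on with
  | _ a ih =>
    intro j
    rw [hY j, hY' j, map_add, map_add]
    cases a with
    | zero => rw [tCoeff_zero_C_X_mul, tCoeff_zero_C_X_mul]
    | succ a =>
      rw [tCoeff_succ_C_X_mul, tCoeff_succ_C_X_mul]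
      simp only [map_sum, tCoeff_mul]
      refine congrArg _ (sum_congr rfl fun l _ => sum_congr rfl fun p hp => ?_)
      rw [ih p.1 (by have := HasAntidiagonal.mem_antidiagonal.1 hp; omega)]

end TCoeff

end MvPowerSeries

section Compositions

theorem piu_append_singleton (L : List ℕ) (k : ℕ) : piu (L ++ [k]) = piu L * (L.sum + k) := by
  rw [piu, piu, List.length_append, List.length_singleton, List.range_succ, List.map_append,
    List.prod_append, List.map_singleton, List.prod_singleton, List.take_of_length_le (by simp),
    List.sum_append, List.sum_singleton]
  congr 2
  refine List.map_congr_left fun j hj => ?_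
  rw [List.take_append_of_le_length (by rw [List.mem_range] at hj; omega)]

theorem List.foldr_comp_append_singleton {α : Type*} (L : List (α → α)) (g : α → α) :
    (L ++ [g]).foldr (· ∘ ·) id = L.foldr (· ∘ ·) id ∘ g := by
  induction L with
  | nil => rfl
  | cons f L ih => simp only [List.cons_append, List.foldr_cons, ih]; rfl

def compositionBlocks (m : ℕ) : Finset (List ℕ) :=
  univ.image (Composition.blocks (n := m))

theorem mem_compositionBlocks {m : ℕ} {l : List ℕ} :
    l ∈ compositionBlocks m ↔ (∀ i ∈ l, 0 < i) ∧ l.sum = m := by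
  refine ⟨?_, fun h => mem_image.2 ⟨⟨l, h.1 _, h.2⟩, mem_univ _, rfl⟩⟩
  intro hl
  obtain ⟨I, -, rfl⟩ := mem_image.1 hl
  exact ⟨fun i hi => I.blocks_pos hi, I.blocks_sum⟩

theorem compositionBlocks_zero : compositionBlocks 0 = {[]} := by
  ext l
  rw [mem_compositionBlocks, mem_singleton]
  refine ⟨fun ⟨hpos, hsum⟩ => ?_, by rintro rfl; simp⟩
  obtain _ | ⟨a, l⟩ := l
  · rfl
  · have := hpos a List.mem_cons_self
    rw [List.sum_cons] at hsum
    omega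

theorem compositionBlocks_succ (m : ℕ) :
    compositionBlocks (m + 1) = ((antidiagonal m).sigma fun p => compositionBlocks p.2).image
      fun x => x.2 ++ [x.1.1 + 1] := by
  ext l
  simp only [mem_image, mem_sigma, HasAntidiagonal.mem_antidiagonal, mem_compositionBlocks,
    Sigma.exists]
  constructor
  · rintro ⟨hpos, hsum⟩
    obtain rfl | ⟨L, k, rfl⟩ := l.eq_nil_or_concat'
    · simp at hsum
    · have hk := hpos k (by simp)
      rw [List.sum_append, List.sum_singleton] at hsum
      exact ⟨(k - 1, L.sum), L, ⟨by omega, fun i hi => hpos i (by simp [hi]), rfl⟩,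
        by rw [Nat.sub_add_cancel hk]⟩
  · rintro ⟨p, L, ⟨hp, hpos, hsum⟩, rfl⟩
    refine ⟨fun i hi => ?_, by rw [List.sum_append, hsum, List.sum_singleton]; omega⟩
    rcases List.mem_append.1 hi with hi | hi
    · exact hpos i hi
    · rw [List.mem_singleton.1 hi]; omega

variable {M : Type*} [AddCommGroup M] [Module ℚ M]

def compositionSum (ψ : ℕ → M → M) (m : ℕ) (x : M) : M :=
  ∑ I : Composition m, ((piu I.blocks : ℚ)⁻¹) • ((I.blocks.map ψ).foldr (· ∘ ·) id) x

theorem compositionSum_eq_sum_compositionBlocks (ψ : ℕ → M → M) (m : ℕ) (x : M) :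
    compositionSum ψ m x =
      ∑ l ∈ compositionBlocks m, ((piu l : ℚ)⁻¹) • ((l.map ψ).foldr (· ∘ ·) id) x := by
  rw [compositionSum, compositionBlocks, sum_image fun I _ J _ h => Composition.ext h]

theorem compositionSum_zero (ψ : ℕ → M → M) (x : M) : compositionSum ψ 0 x = x := by
  simp [compositionSum_eq_sum_compositionBlocks, compositionBlocks_zero, piu]

theorem compositionSum_succ (ψ : ℕ → M → M) (m : ℕ) (x : M) :
    ((m + 1 : ℕ) : ℚ) • compositionSum ψ (m + 1) x =
      ∑ p ∈ antidiagonal m, compositionSum ψ p.2 (ψ (p.1 + 1) x) := by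
  simp only [compositionSum_eq_sum_compositionBlocks, compositionBlocks_succ, smul_sum]
  rw [sum_image, sum_sigma]
  · refine sum_congr rfl fun p hp => sum_congr rfl fun L hL => ?_
    rw [mem_compositionBlocks] at hL
    rw [HasAntidiagonal.mem_antidiagonal] at hp
    rw [smul_smul, List.map_append, List.map_singleton, List.foldr_comp_append_singleton,
      piu_append_singleton, hL.2, Function.comp_apply, Nat.cast_mul, mul_inv,
      show p.2 + (p.1 + 1) = m + 1 by omega, mul_left_comm, mul_inv_cancel₀ (by positivity),
      mul_one]
  · rintro ⟨p, L⟩ hx ⟨p', L'⟩ hx' h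
    simp only [coe_sigma, Set.mem_sigma_iff, mem_coe, HasAntidiagonal.mem_antidiagonal,
      mem_compositionBlocks] at hx hx'
    obtain ⟨hL, hk⟩ := List.append_inj' h rfl
    simp only [List.cons.injEq, add_left_inj, and_true] at hk
    subst hL
    have : p = p' := Prod.ext hk (by omega)
    subst this
    rfl

end Compositions

section Inversion

open MvPowerSeries

variable {R : Type*} [CommRing R]

theorem pd_eq_pderiv (j : Fin n) (f : MvPowerSeries (Fin n) R) : pd j f = pderiv R j f := by
  ext1 e
  change (e j + 1) • coeff (e + Finsupp.single j 1) f = _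
  rw [coeff_pderiv, nsmul_eq_mul, mul_comm]
  push_cast
  rfl

/-- The vector field `(JH)^q H` of the derivation `ψ_{q+1}`. -/
def psiField (H : Fin n → MvPowerSeries (Fin n) R) (q : ℕ) : Fin n → MvPowerSeries (Fin n) R :=
  ((Matrix.of fun a b => pd b (H a)) ^ q).mulVec H

theorem psiField_zero (H : Fin n → MvPowerSeries (Fin n) R) : psiField H 0 = H := by
  rw [psiField, pow_zero, Matrix.one_mulVec]

theorem psiField_succ (H : Fin n → MvPowerSeries (Fin n) R) (q : ℕ) (j : Fin n) :
    psiField H (q + 1) j = ∑ l, psiField H q l * pderiv R l (H j) := by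
  rw [psiField, pow_succ', ← Matrix.mulVec_mulVec]
  simp only [psiField, Matrix.mulVec, dotProduct, Matrix.of_apply, pd_eq_pderiv]
  exact sum_congr rfl fun l _ => mul_comm _ _

theorem psiOp_succ (H : Fin n → MvPowerSeries (Fin n) R) (q : ℕ) (f : MvPowerSeries (Fin n) R) :
    psiOp H (q + 1) f = ∑ j, psiField H q j * pderiv R j f := by
  simp only [psiOp, psiField, pd_eq_pderiv, Nat.add_sub_cancel]

variable {H : Fin n → MvPowerSeries (Fin n) R} {G : Fin n → MvPowerSeries (Fin n) (PowerSeries R)}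

theorem mapDerivation_derivative_of_fixedPoint (hG : HasSubst G)
    (hfix : ∀ j, G j = X j + C PowerSeries.X * subst G (H j)) (j : Fin n) :
    mapDerivation (PowerSeries.derivative R) (G j) =
      subst G (H j) + C PowerSeries.X *
        ∑ l, mapDerivation (PowerSeries.derivative R) (G l) * subst G (pderiv R l (H j)) := by
  conv_lhs => rw [hfix j]
  rw [map_add, mapDerivation_X, zero_add, Derivation.leibniz, mapDerivation_C,
    PowerSeries.derivative_X, map_one, smul_eq_mul, smul_eq_mul, mul_one, add_comm,
    mapDerivation_subst _ hG]

theorem mapDerivation_derivative_eq_tSeries (hG : HasSubst G)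
    (hfix : ∀ j, G j = X j + C PowerSeries.X * subst G (H j)) (j : Fin n) :
    mapDerivation (PowerSeries.derivative R) (G j) =
      tSeries fun q => subst G (psiField H q j) := by
  refine congrFun (eq_of_eq_add_C_X_mul_sum (mapDerivation_derivative_of_fixedPoint hG hfix)
    (Y' := fun j => tSeries fun q => subst G (psiField H q j)) fun j => ?_) j
  rw [tSeries_eq_add_C_X_mul, psiField_zero]
  simp only [psiField_succ, ← substAlgHom_apply hG, map_sum, map_mul, tSeries_mul, sum_tSeries]

theorem mapDerivation_derivative_subst_eq_tSeries (hG : HasSubst G)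
    (hfix : ∀ j, G j = X j + C PowerSeries.X * subst G (H j)) (f : MvPowerSeries (Fin n) R) :
    mapDerivation (PowerSeries.derivative R) (subst G f) =
      tSeries fun q => subst G (psiOp H (q + 1) f) := by
  rw [mapDerivation_subst _ hG]
  simp only [mapDerivation_derivative_eq_tSeries hG hfix, psiOp_succ, tSeries_mul, sum_tSeries,
    ← substAlgHom_apply hG, map_sum, map_mul]

theorem substCoeff_eq_coeff_subst (f : MvPowerSeries (Fin n) (PowerSeries R))
    {g : Fin n → MvPowerSeries (Fin n) (PowerSeries R)} (hg : ∀ j, constantCoeff (g j) = 0)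
    (e : Fin n →₀ ℕ) : substCoeff f g e = coeff e (subst g f) := by
  rw [substCoeff, coeff_subst (hasSubst_of_constantCoeff_zero hg),
    finsum_eq_sum_of_support_subset _ fun d hd => ?_]
  · exact sum_congr rfl fun d _ => by
      rw [smul_eq_mul, Finsupp.prod_fintype _ _ fun _ => pow_zero _]
  · rw [coe_Iic, Set.mem_Iic]
    by_contra hnot
    obtain ⟨i, hi⟩ : ∃ i, (e.sum fun _ k => k) < d i := by simpa [Finsupp.le_def] using hnot
    refine hd ?_
    beta_reduce
    rw [Finsupp.prod_fintype _ _ fun _ => pow_zero _,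
      coeff_prod_pow_eq_zero_of_degree_lt hg (hi.trans_le (Finsupp.le_degree i d)), smul_zero]

variable {N : ℕ → Fin n → MvPowerSeries (Fin n) R}

theorem constantCoeff_Gcomp
    (hGF : ∀ i e, substCoeff (Gcomp N i) (Fcomp H) e = coeff e (X i)) (j : Fin n) :
    constantCoeff (Gcomp N j) = 0 := by
  have hbox : (Finsupp.equivFunOnFinite.symm fun _ : Fin n =>
      (0 : Fin n →₀ ℕ).sum fun _ k => k) = ⊥ := by
    ext
    simp [bot_eq_zero]
  have h := hGF j 0
  rw [substCoeff, hbox, Iic_bot, sum_singleton, bot_eq_zero] at h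
  simpa using h

theorem Gcomp_eq_X_add (hFG : ∀ i e, substCoeff (Fcomp H i) (Gcomp N) e = coeff e (X i))
    (hG0 : ∀ j, constantCoeff (Gcomp N j) = 0) (j : Fin n) :
    Gcomp N j = X j + C PowerSeries.X * subst (Gcomp N) (H j) := by
  have hG := hasSubst_of_constantCoeff_zero hG0
  have h : subst (Gcomp N) (Fcomp H j) = X j :=
    MvPowerSeries.ext fun e => by rw [← substCoeff_eq_coeff_subst _ hG0, hFG]
  have hC : map PowerSeries.C (H j) = map (algebraMap R (PowerSeries R)) (H j) := rfl
  rw [Fcomp, subst_sub hG, subst_mul hG, subst_X hG, subst_C, hC, subst_map_algebraMap hG] at h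
  linear_combination h

theorem tCoeff_zero_Gcomp (j : Fin n) : tCoeff 0 (Gcomp N j) = X j := by
  rw [Gcomp, map_add, tCoeff_zero_C_X_mul, add_zero, ← map_X PowerSeries.C, tCoeff_map_C,
    if_pos rfl]

theorem tCoeff_succ_Gcomp (m : ℕ) (j : Fin n) : tCoeff (m + 1) (Gcomp N j) = N (m + 1) j := by
  rw [Gcomp, map_add, tCoeff_succ_C_X_mul, ← map_X PowerSeries.C, tCoeff_map_C,
    if_neg m.succ_ne_zero, zero_add]
  ext1 e
  exact PowerSeries.coeff_mk m fun k => coeff e (N (k + 1) j)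

end Inversion

open MvPowerSeries in
theorem tCoeff_subst_eq_compositionSum {H : Fin n → MvPowerSeries (Fin n) K}
    {G : Fin n → MvPowerSeries (Fin n) (PowerSeries K)} (hG : HasSubst G)
    (hfix : ∀ j, G j = X j + C PowerSeries.X * subst G (H j)) (hG0 : ∀ j, tCoeff 0 (G j) = X j)
    (m : ℕ) (f : MvPowerSeries (Fin n) K) :
    tCoeff m (subst G f) = compositionSum (psiOp H) m f := by
  induction m using Nat.strong_induction_on generalizing f with
  | _ m ih =>
  cases m with
  | zero => rw [tCoeff_zero_subst hG, funext hG0, subst_self, compositionSum_zero]; rfl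
  | succ m =>
    refine smul_right_injective _ (Nat.cast_ne_zero.2 m.succ_ne_zero : ((m + 1 : ℕ) : ℚ) ≠ 0) ?_
    dsimp only
    rw [compositionSum_succ, Nat.cast_smul_eq_nsmul, ← tCoeff_mapDerivation_derivative,
      mapDerivation_derivative_subst_eq_tSeries hG hfix, tCoeff_tSeries]
    exact Finset.sum_congr rfl fun p hp =>
      ih p.2 (by have := Finset.HasAntidiagonal.mem_antidiagonal.1 hp; omega) _

theorem stmt17_general (H : Fin n → MvPowerSeries (Fin n) K)
    (N : ℕ → Fin n → MvPowerSeries (Fin n) K)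
    (hFG : ∀ (i : Fin n) (e : Fin n →₀ ℕ),
      substCoeff (Fcomp H i) (Gcomp N) e
        = MvPowerSeries.coeff (R := PowerSeries K) e (MvPowerSeries.X i))
    (hGF : ∀ (i : Fin n) (e : Fin n →₀ ℕ),
      substCoeff (Gcomp N i) (Fcomp H) e
        = MvPowerSeries.coeff (R := PowerSeries K) e (MvPowerSeries.X i)) :
    ∀ m, 1 ≤ m → ∀ i, N m i
      = ∑ I : Composition m,
          ((piu I.blocks : ℚ)⁻¹) •
            ((I.blocks.map (psiOp H)).foldr (· ∘ ·) id)
              (MvPowerSeries.X i : MvPowerSeries (Fin n) K) := by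
  intro m hm i
  obtain ⟨m, rfl⟩ := Nat.exists_eq_add_of_le' hm
  have hG0 := constantCoeff_Gcomp hGF
  have hG := MvPowerSeries.hasSubst_of_constantCoeff_zero hG0
  rw [← tCoeff_succ_Gcomp (N := N), ← MvPowerSeries.subst_X (R := K) hG i,
    tCoeff_subst_eq_compositionSum hG (Gcomp_eq_X_add hFG hG0) tCoeff_zero_Gcomp]
  rfl

/-- with `F_t(z) = z - tH(z)` (`H` of order `≥ 2`) and compositional
inverse `G_t(z) = z + ∑_{m≥1} t^m N_[m](z)`, for every `m ≥ 1` one has the inversion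
formula `N_[m](z) = ∑_{I ∈ C_m} (1/π_u(I)) ψ^I z`, where `ψ_k = [((JH)^{k-1}H) ∂/∂z]`
and `ψ^I = ψ_{i_1}∘⋯∘ψ_{i_k}` is applied to `z` componentwise. -/
theorem stmt17 (H : Fin n → MvPowerSeries (Fin n) K)
    (hH : ∀ i (e : Fin n →₀ ℕ), (e.sum fun _ k => k) ≤ 1 →
      MvPowerSeries.coeff (R := K) e (H i) = 0)
    (N : ℕ → Fin n → MvPowerSeries (Fin n) K)
    (hFG : ∀ (i : Fin n) (e : Fin n →₀ ℕ),
      substCoeff (Fcomp H i) (Gcomp N) e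
        = MvPowerSeries.coeff (R := PowerSeries K) e (MvPowerSeries.X i))
    (hGF : ∀ (i : Fin n) (e : Fin n →₀ ℕ),
      substCoeff (Gcomp N i) (Fcomp H) e
        = MvPowerSeries.coeff (R := PowerSeries K) e (MvPowerSeries.X i)) :
    ∀ m, 1 ≤ m → ∀ i, N m i
      = ∑ I : Composition m,
          ((piu I.blocks : ℚ)⁻¹) •
            ((I.blocks.map (psiOp H)).foldr (· ∘ ·) id)
              (MvPowerSeries.X i : MvPowerSeries (Fin n) K) :=
  stmt17_general H N hFG hGF

end
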